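/- Let Γ be a torsion-free abelian group, E a Γ-graded division ring, n > 1, and δ ∈ Γ such that the order of δ + Γ_E in Γ/Γ_E is greater than 3n (possibly infinite). Let S = Mₙ(E)(δ̄) with δ̄ = (0, δ, 2δ, …, (n−1)δ). Then: (a) the degree-0 component S₀ consists exactly of the diagonal matrices with entries in E₀; (b) Γ_S* = Γ_E, i.e., the degrees of homogeneous units of S are exactly the elements of Γ_E; and (c) S_h* = S₀* · {c·𝕀ₙ : c ∈ E_h*}. -/

import Mathlib

set_option maxHeartbeats 1000000

/-- The degree-`lam` homogeneous component of the matrix ring `Mₙ(E)(δ̄)` over a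
`Γ`-graded ring `E`, with the grading shifted by `δ̄`. -/
def MatrixGrade {Γ E : Type*} [AddCommGroup Γ] [Ring E] (𝒜 : Γ → AddSubgroup E)
    {ι : Type*} (δ : ι → Γ) (lam : Γ) : Set (Matrix ι ι E) :=
  {A | ∀ i j, A i j ∈ 𝒜 (lam + δ j - δ i)}

/-!
The `(i, j)` entry of a homogeneous matrix of degree `λ` in `Mₙ(E)(δ̄)` lies in degree
`λ + (j - i)δ`. For a homogeneous unit, the quotient of two nonzero entries is a nonzero
homogeneous element of `E` of degree `kδ` with `|k| < 2n`, so the gap hypothesis on `δ` puts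
all nonzero entries on a single diagonal `j - i = d`. Row `0` and column `0` of a unit both
contain nonzero entries, whence `d ≥ 0` and `d ≤ 0`: the unit is diagonal, with units of degree
`λ` on the diagonal, and dividing by its `(0, 0)` entry leaves a unit of degree `0`.
-/

open Matrix

-- The grade group `Γ_E`.
def gradeSupport {Γ E : Type*} [AddGroup E] (𝒜 : Γ → AddSubgroup E) : Set Γ :=
  {γ | ∃ x : E, x ≠ 0 ∧ x ∈ 𝒜 γ}

section GradedRing

variable {Γ E : Type*} [AddCommGroup Γ] [DecidableEq Γ] [Ring E] {𝒜 : Γ → AddSubgroup E}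
  [GradedRing 𝒜]

theorem Units.inv_mem_graded (u : Eˣ) {γ : Γ} (h : (u : E) ∈ 𝒜 γ) :
    ((u⁻¹ : Eˣ) : E) ∈ 𝒜 (-γ) := by
  have hz : (u : E) * (DirectSum.decompose 𝒜 ((u⁻¹ : Eˣ) : E) (-γ) : E) = 1 := by
    rw [← DirectSum.coe_decompose_mul_add_of_left_mem 𝒜 h, Units.mul_inv, add_neg_cancel,
      DirectSum.decompose_of_mem_same 𝒜 SetLike.GradedOne.one_mem]
  rw [u.inv_eq_of_mul_eq_one_right hz]
  exact SetLike.coe_mem _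

theorem neg_mem_gradeSupport (hdiv : ∀ (γ : Γ) (x : E), x ∈ 𝒜 γ → x ≠ 0 → IsUnit x)
    {γ : Γ} (h : γ ∈ gradeSupport 𝒜) : -γ ∈ gradeSupport 𝒜 := by
  obtain ⟨x, hx0, hx⟩ := h
  have := nontrivial_of_ne _ _ hx0
  obtain ⟨u, rfl⟩ := hdiv γ x hx hx0
  exact ⟨_, (u⁻¹).ne_zero, u.inv_mem_graded hx⟩

theorem add_mem_gradeSupport (hdiv : ∀ (γ : Γ) (x : E), x ∈ 𝒜 γ → x ≠ 0 → IsUnit x)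
    {a b : Γ} (ha : a ∈ gradeSupport 𝒜) (hb : b ∈ gradeSupport 𝒜) :
    a + b ∈ gradeSupport 𝒜 := by
  obtain ⟨x, hx0, hx⟩ := ha
  obtain ⟨y, hy0, hy⟩ := hb
  obtain ⟨u, rfl⟩ := hdiv a x hx hx0
  exact ⟨_, (Units.mul_right_eq_zero u).not.2 hy0, SetLike.mul_mem_graded hx hy⟩

theorem zsmul_notMem_gradeSupport (hdiv : ∀ (γ : Γ) (x : E), x ∈ 𝒜 γ → x ≠ 0 → IsUnit x)
    {δ : Γ} {N : ℕ} (h : ∀ m : ℕ, 1 ≤ m → m ≤ N → m • δ ∉ gradeSupport 𝒜)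
    {k : ℤ} (hk : k ≠ 0) (hkN : k.natAbs ≤ N) : k • δ ∉ gradeSupport 𝒜 := by
  rcases Int.natAbs_eq k with hk' | hk' <;> rw [hk']
  · rw [natCast_zsmul]
    exact h _ (by omega) hkN
  · rw [neg_zsmul, natCast_zsmul]
    exact fun hmem => h _ (by omega) hkN (by simpa using neg_mem_gradeSupport hdiv hmem)

end GradedRing

namespace Matrix

variable {ι R : Type*} [Semiring R]

theorem exists_apply_ne_zero_of_isUnit [Fintype ι] [DecidableEq ι] [Nontrivial R]
    {A : Matrix ι ι R} (hA : IsUnit A) (i : ι) : ∃ j, A i j ≠ 0 := by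
  obtain ⟨B, hB⟩ := hA.exists_right_inv
  by_contra! h
  simpa [mul_apply, h] using congrFun (congrFun hB i) i

theorem exists_apply_ne_zero_of_isUnit' [Fintype ι] [DecidableEq ι] [Nontrivial R]
    {A : Matrix ι ι R} (hA : IsUnit A) (j : ι) : ∃ i, A i j ≠ 0 := by
  obtain ⟨B, hB⟩ := hA.exists_left_inv
  by_contra! h
  simpa [mul_apply, h] using congrFun (congrFun hB j) j

theorem isDiag_of_isUnit_of_sub_eq [Nontrivial R] {n : ℕ} {A : Matrix (Fin n) (Fin n) R}
    (hA : IsUnit A)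
    (h : ∀ i j i' j', A i j ≠ 0 → A i' j' ≠ 0 →
      ((j : ℕ) : ℤ) - (i : ℕ) = ((j' : ℕ) : ℤ) - (i' : ℕ)) :
    A.IsDiag := by
  intro i j hij
  by_contra hne
  obtain ⟨k, hk⟩ := exists_apply_ne_zero_of_isUnit hA ⟨0, i.pos⟩
  obtain ⟨l, hl⟩ := exists_apply_ne_zero_of_isUnit' hA ⟨0, i.pos⟩
  have hrow := h _ _ _ _ hne hk
  have hcol := h _ _ _ _ hne hl
  exact hij (Fin.ext (by simp only at hrow hcol; omega))

theorem IsDiag.exists_units_diagonal [Fintype ι] [DecidableEq ι] {A : (Matrix ι ι R)ˣ}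
    (hA : (A : Matrix ι ι R).IsDiag) :
    ∃ u : ι → Rˣ, (A : Matrix ι ι R) = diagonal (fun i => (u i : R)) ∧
      ((A⁻¹ : (Matrix ι ι R)ˣ) : Matrix ι ι R) = diagonal (fun i => (((u i)⁻¹ : Rˣ) : R)) := by
  obtain ⟨d, hd⟩ : ∃ d, (A : Matrix ι ι R) = diagonal d := ⟨_, hA.diagonal_diag.symm⟩
  have hr i : d i * (A⁻¹ : (Matrix ι ι R)ˣ) i i = 1 := by
    simpa [hd] using congrFun (congrFun A.mul_inv i) i
  have hl i : (A⁻¹ : (Matrix ι ι R)ˣ) i i * d i = 1 := by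
    simpa [hd] using congrFun (congrFun A.inv_mul i) i
  refine ⟨fun i => ⟨d i, _, hr i, hl i⟩, hd, A.inv_eq_of_mul_eq_one_right ?_⟩
  simp [hd, diagonal_mul_diagonal, hr]

theorem val_map_scalar [Fintype ι] [DecidableEq ι] (c : Rˣ) :
    (Units.map (scalar ι : R →+* Matrix ι ι R).toMonoidHom c : Matrix ι ι R) = (c : R) • 1 := by
  simp [smul_one_eq_diagonal]

end Matrix

namespace MatrixGrade

variable {Γ E : Type*} [AddCommGroup Γ] [Ring E] {𝒜 : Γ → AddSubgroup E} {ι : Type*} {δ : ι → Γ}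

theorem diagonal_mem_iff [DecidableEq ι] {d : ι → E} {a : Γ} :
    diagonal d ∈ MatrixGrade 𝒜 δ a ↔ ∀ i, d i ∈ 𝒜 a := by
  refine ⟨fun h i => by simpa using h i i, fun h i j => ?_⟩
  rcases eq_or_ne i j with rfl | hij
  · simpa using h i
  · simp [hij, zero_mem]

theorem smul_one_mem [DecidableEq ι] {c : E} {a : Γ} (hc : c ∈ 𝒜 a) :
    c • (1 : Matrix ι ι E) ∈ MatrixGrade 𝒜 δ a := by
  rw [smul_one_eq_diagonal]
  exact diagonal_mem_iff.2 fun _ => hc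

theorem mem_zero_iff (h : ∀ i j, i ≠ j → δ j - δ i ∉ gradeSupport 𝒜) {A : Matrix ι ι E} :
    A ∈ MatrixGrade 𝒜 δ 0 ↔ A.IsDiag ∧ ∀ i, A i i ∈ 𝒜 0 := by
  refine ⟨fun hA => ⟨fun i j hij => ?_, fun i => by simpa using hA i i⟩, fun ⟨hdiag, hmem⟩ => ?_⟩
  · by_contra hne
    exact h i j hij ⟨A i j, hne, by simpa using hA i j⟩
  · classical
    rw [← hdiag.diagonal_diag]
    exact diagonal_mem_iff.2 hmem

theorem mul_mem [SetLike.GradedMul 𝒜] [Fintype ι] {A B : Matrix ι ι E} {a b : Γ}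
    (hA : A ∈ MatrixGrade 𝒜 δ a) (hB : B ∈ MatrixGrade 𝒜 δ b) :
    A * B ∈ MatrixGrade 𝒜 δ (a + b) := fun i j => by
  rw [mul_apply]
  refine AddSubgroup.sum_mem _ fun k _ => ?_
  convert SetLike.mul_mem_graded (hA i k) (hB k j) using 2
  abel

variable [DecidableEq Γ] [GradedRing 𝒜]

theorem sub_mem_gradeSupport (hdiv : ∀ (γ : Γ) (x : E), x ∈ 𝒜 γ → x ≠ 0 → IsUnit x)
    {A : Matrix ι ι E} {a : Γ} (hA : A ∈ MatrixGrade 𝒜 δ a) {i j i' j' : ι} (h : A i j ≠ 0)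
    (h' : A i' j' ≠ 0) : (δ j' - δ i') - (δ j - δ i) ∈ gradeSupport 𝒜 := by
  convert add_mem_gradeSupport hdiv (neg_mem_gradeSupport hdiv ⟨_, h, hA i j⟩)
    ⟨_, h', hA i' j'⟩ using 1
  abel

theorem isDiag_of_isUnit [Nontrivial E]
    (hdiv : ∀ (γ : Γ) (x : E), x ∈ 𝒜 γ → x ≠ 0 → IsUnit x) {n : ℕ} {δ : Γ}
    (hgap : ∀ k : ℤ, k ≠ 0 → k.natAbs < 2 * n → k • δ ∉ gradeSupport 𝒜)
    {A : Matrix (Fin n) (Fin n) E} (hA : IsUnit A) {a : Γ}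
    (hAa : A ∈ MatrixGrade 𝒜 (fun i : Fin n => (i : ℕ) • δ) a) : A.IsDiag := by
  refine isDiag_of_isUnit_of_sub_eq hA fun i j i' j' h h' => ?_
  by_contra hne
  refine hgap ((j' - i' : ℤ) - (j - i)) (sub_ne_zero.2 (Ne.symm hne)) (by omega) ?_
  convert sub_mem_gradeSupport hdiv hAa h h' using 1
  simp only [sub_smul, natCast_zsmul]

theorem exists_eq_mul_smul_one [Fintype ι] [DecidableEq ι] (i₀ : ι) {A : (Matrix ι ι E)ˣ}
    (hdiag : (A : Matrix ι ι E).IsDiag) {a : Γ} (hA : (A : Matrix ι ι E) ∈ MatrixGrade 𝒜 δ a) :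
    ∃ (B : (Matrix ι ι E)ˣ) (c : Eˣ),
      (B : Matrix ι ι E) ∈ MatrixGrade 𝒜 δ 0 ∧
      ((B⁻¹ : (Matrix ι ι E)ˣ) : Matrix ι ι E) ∈ MatrixGrade 𝒜 δ 0 ∧
      (c : E) ∈ 𝒜 a ∧ (A : Matrix ι ι E) = B * ((c : E) • 1) := by
  obtain ⟨u, hu, hu'⟩ := hdiag.exists_units_diagonal
  have hmem i : (u i : E) ∈ 𝒜 a := diagonal_mem_iff.1 (hu ▸ hA) i
  have hinv : ((A⁻¹ : (Matrix ι ι E)ˣ) : Matrix ι ι E) ∈ MatrixGrade 𝒜 δ (-a) :=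
    hu' ▸ diagonal_mem_iff.2 fun i => (u i).inv_mem_graded (hmem i)
  set c := u i₀
  set C := Units.map (scalar ι : E →+* Matrix ι ι E).toMonoidHom c
  have hC : (C : Matrix ι ι E) ∈ MatrixGrade 𝒜 δ a := by
    rw [val_map_scalar]
    exact smul_one_mem (hmem i₀)
  have hC' : ((C⁻¹ : (Matrix ι ι E)ˣ) : Matrix ι ι E) ∈ MatrixGrade 𝒜 δ (-a) := by
    rw [← map_inv, val_map_scalar]
    exact smul_one_mem (c.inv_mem_graded (hmem i₀))
  refine ⟨A * C⁻¹, c, ?_, ?_, hmem i₀, ?_⟩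
  · simpa using mul_mem hA hC'
  · simpa [_root_.mul_inv_rev] using mul_mem hC hinv
  · rw [← val_map_scalar, ← Units.val_mul, inv_mul_cancel_right]

end MatrixGrade

theorem shifted_matrix_ring_structure_general {Γ E : Type*} [AddCommGroup Γ] [DecidableEq Γ]
    [Ring E] [Nontrivial E] (𝒜 : Γ → AddSubgroup E) [GradedRing 𝒜]
    (hdiv : ∀ (γ : Γ) (x : E), x ∈ 𝒜 γ → x ≠ 0 → IsUnit x)
    {n : ℕ} (hn : 1 < n) (δ : Γ)
    -- the order of `δ + Γ_E` in `Γ/Γ_E` exceeds `3n` (possibly infinite)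
    (horder : ∀ m : ℕ, 1 ≤ m → m ≤ 3 * n → ¬ ∃ x : E, x ≠ 0 ∧ x ∈ 𝒜 (m • δ)) :
    -- (a) `S₀` consists exactly of the diagonal matrices over `E₀`
    (∀ A : Matrix (Fin n) (Fin n) E,
      A ∈ MatrixGrade 𝒜 (fun i : Fin n => (i : ℕ) • δ) 0 ↔
        ((∀ i j : Fin n, i ≠ j → A i j = 0) ∧ ∀ i, A i i ∈ 𝒜 (0 : Γ))) ∧
    -- (b) `Γ_S* = Γ_E`
    (∀ lam : Γ,
      (∃ A : (Matrix (Fin n) (Fin n) E)ˣ,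
        A.val ∈ MatrixGrade 𝒜 (fun i : Fin n => (i : ℕ) • δ) lam) ↔
      (∃ x : E, x ≠ 0 ∧ x ∈ 𝒜 lam)) ∧
    -- (c) `S_h* = S₀* · (E_h* · 𝕀ₙ)`
    (∀ A : (Matrix (Fin n) (Fin n) E)ˣ,
      (∃ lam, A.val ∈ MatrixGrade 𝒜 (fun i : Fin n => (i : ℕ) • δ) lam) ↔
      ∃ (B : (Matrix (Fin n) (Fin n) E)ˣ) (c : Eˣ),
        B.val ∈ MatrixGrade 𝒜 (fun i : Fin n => (i : ℕ) • δ) 0 ∧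
        B⁻¹.val ∈ MatrixGrade 𝒜 (fun i : Fin n => (i : ℕ) • δ) 0 ∧
        (∃ γ : Γ, c.val ∈ 𝒜 γ) ∧
        A.val = B.val * (c.val • (1 : Matrix (Fin n) (Fin n) E))) := by
  have hgap (k : ℤ) (hk : k ≠ 0) (hkn : k.natAbs < 2 * n) : k • δ ∉ gradeSupport 𝒜 :=
    zsmul_notMem_gradeSupport hdiv horder hk (by omega)
  have hsplit {lam : Γ} {A : (Matrix (Fin n) (Fin n) E)ˣ}
      (hA : A.val ∈ MatrixGrade 𝒜 (fun i : Fin n => (i : ℕ) • δ) lam) :=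
    MatrixGrade.exists_eq_mul_smul_one ⟨0, by omega⟩
      (MatrixGrade.isDiag_of_isUnit hdiv hgap A.isUnit hA) hA
  refine ⟨fun A => MatrixGrade.mem_zero_iff fun i j hij => ?_, fun lam => ⟨?_, ?_⟩,
    fun A => ⟨?_, ?_⟩⟩
  · rw [← natCast_zsmul, ← natCast_zsmul, ← sub_smul]
    exact hgap _ (sub_ne_zero.2 (by exact_mod_cast Fin.val_ne_of_ne hij.symm)) (by omega)
  · rintro ⟨A, hA⟩
    obtain ⟨-, c, -, -, hc, -⟩ := hsplit hA
    exact ⟨c, c.ne_zero, hc⟩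
  · rintro ⟨x, hx0, hx⟩
    obtain ⟨u, rfl⟩ := hdiv _ _ hx hx0
    refine ⟨Units.map (scalar (Fin n) : E →+* Matrix (Fin n) (Fin n) E).toMonoidHom u, ?_⟩
    simpa only [val_map_scalar] using MatrixGrade.smul_one_mem hx
  · rintro ⟨lam, hA⟩
    obtain ⟨B, c, hB, hB', hc, hAB⟩ := hsplit hA
    exact ⟨B, c, hB, hB', ⟨lam, hc⟩, hAB⟩
  · rintro ⟨B, c, hB, -, ⟨γ, hc⟩, hAB⟩
    exact ⟨γ, by simpa [hAB] using MatrixGrade.mul_mem hB (MatrixGrade.smul_one_mem hc)⟩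

/-- let `Γ` be a torsion-free abelian group, `E` a `Γ`-graded
division ring, `n > 1`, and `δ ∈ Γ` whose coset `δ + Γ_E` has order `> 3n` (possibly
infinite) in `Γ/Γ_E`.  Let `S = Mₙ(E)(δ̄)` with `δ̄ = (0, δ, 2δ, …, (n-1)δ)`.  Then:
(a) `S₀` consists exactly of the diagonal matrices with entries in `E₀`;
(b) `Γ_S* = Γ_E`; and (c) `S_h* = S₀* · {c·𝕀ₙ : c ∈ E_h*}`. -/
theorem shifted_matrix_ring_structure {Γ E : Type*} [AddCommGroup Γ] [DecidableEq Γ]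
    [Ring E] [Nontrivial E] (𝒜 : Γ → AddSubgroup E) [GradedRing 𝒜]
    (hdiv : ∀ (γ : Γ) (x : E), x ∈ 𝒜 γ → x ≠ 0 → IsUnit x)
    -- `Γ` is torsion-free
    (htf : ∀ (γ : Γ) (m : ℕ), m ≠ 0 → m • γ = 0 → γ = 0)
    {n : ℕ} (hn : 1 < n) (δ : Γ)
    -- the order of `δ + Γ_E` in `Γ/Γ_E` exceeds `3n` (possibly infinite)
    (horder : ∀ m : ℕ, 1 ≤ m → m ≤ 3 * n → ¬ ∃ x : E, x ≠ 0 ∧ x ∈ 𝒜 (m • δ)) :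
    -- (a) `S₀` consists exactly of the diagonal matrices over `E₀`
    (∀ A : Matrix (Fin n) (Fin n) E,
      A ∈ MatrixGrade 𝒜 (fun i : Fin n => (i : ℕ) • δ) 0 ↔
        ((∀ i j : Fin n, i ≠ j → A i j = 0) ∧ ∀ i, A i i ∈ 𝒜 (0 : Γ))) ∧
    -- (b) `Γ_S* = Γ_E`
    (∀ lam : Γ,
      (∃ A : (Matrix (Fin n) (Fin n) E)ˣ,
        A.val ∈ MatrixGrade 𝒜 (fun i : Fin n => (i : ℕ) • δ) lam) ↔
      (∃ x : E, x ≠ 0 ∧ x ∈ 𝒜 lam)) ∧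
    -- (c) `S_h* = S₀* · (E_h* · 𝕀ₙ)`
    (∀ A : (Matrix (Fin n) (Fin n) E)ˣ,
      (∃ lam, A.val ∈ MatrixGrade 𝒜 (fun i : Fin n => (i : ℕ) • δ) lam) ↔
      ∃ (B : (Matrix (Fin n) (Fin n) E)ˣ) (c : Eˣ),
        B.val ∈ MatrixGrade 𝒜 (fun i : Fin n => (i : ℕ) • δ) 0 ∧
        B⁻¹.val ∈ MatrixGrade 𝒜 (fun i : Fin n => (i : ℕ) • δ) 0 ∧
        (∃ γ : Γ, c.val ∈ 𝒜 γ) ∧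
        A.val = B.val * (c.val • (1 : Matrix (Fin n) (Fin n) E))) :=
  shifted_matrix_ring_structure_general 𝒜 hdiv hn δ horder
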